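/- Fix a ranking X over a finite set C and a nonnegative integer k. The instance (C, profile R₁,...,Rₙ, X, cost function on rankings, budget B, k) of $-Bribery-Kemeny-Score is a yes-instance if and only if there exists a subset S ⊆ {1,...,n} with Σ_{i∈S} cost(Rᵢ) ≤ B and Σ_{i∈S} KT(X, Rᵢ) ≥ D − k, where D = Σ_{i=1}^{n} KT(X, Rᵢ). -/
import Mathlib


/-- Kendall tau distance between rankings `π π' : Fin m ≃ C`. -/
def KT {m : ℕ} {C : Type} [Fintype C] (π π' : Fin m ≃ C) : ℕ :=
  ((Finset.univ : Finset (C × C)).filter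
    (fun p => π.symm p.1 < π.symm p.2 ∧ π'.symm p.2 < π'.symm p.1)).card

lemma KT_self {m : ℕ} {C : Type} [Fintype C] (π : Fin m ≃ C) : KT π π = 0 := by
  unfold KT
  rw [Finset.card_eq_zero, Finset.filter_eq_empty_iff]
  rintro p - ⟨h1, h2⟩
  exact absurd h1 (not_lt.2 h2.le)

/-- The `$`-Bribery-Kemeny-Score instance `(C, R₁,…,Rₙ, X, cost, B, k)` is a
yes-instance (some rankings can be replaced by arbitrary rankings, with total
cost of replaced rankings at most `B`, so that the total Kendall tau distance
from `X` is at most `k`) iff there is a set `S` of indices with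
`∑_{i∈S} cost(Rᵢ) ≤ B` and `∑_{i∈S} KT(X,Rᵢ) ≥ D − k`, where
`D = ∑ᵢ KT(X,Rᵢ)`. -/
theorem dollarBribery_iff_knapsack {m n : ℕ} {C : Type} [Fintype C]
    (X : Fin m ≃ C) (R : Fin n → (Fin m ≃ C)) (cost : Fin n → ℕ) (B k : ℕ) :
    (∃ (R' : Fin n → (Fin m ≃ C)) (S : Finset (Fin n)),
        (∀ i ∉ S, R' i = R i) ∧ (∑ i ∈ S, cost i) ≤ B ∧
        (∑ i, KT X (R' i)) ≤ k) ↔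
    (∃ S : Finset (Fin n), (∑ i ∈ S, cost i) ≤ B ∧
        (∑ i, KT X (R i)) - k ≤ ∑ i ∈ S, KT X (R i)) := by
  constructor
  · rintro ⟨R', S, hR', hB, hk⟩
    refine ⟨S, hB, ?_⟩
    have hsplit : ∑ i, KT X (R i)
        = ∑ i ∈ S, KT X (R i) + ∑ i ∈ Sᶜ, KT X (R i) :=
      (Finset.sum_add_sum_compl S _).symm
    have hcompl : ∑ i ∈ Sᶜ, KT X (R i) = ∑ i ∈ Sᶜ, KT X (R' i) :=
      Finset.sum_congr rfl fun i hi => by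
        rw [hR' i (Finset.mem_compl.1 hi)]
    have hle : ∑ i ∈ Sᶜ, KT X (R' i) ≤ k :=
      le_trans (Finset.sum_le_sum_of_subset (Finset.subset_univ _)) hk
    omega
  · rintro ⟨S, hB, hk⟩
    refine ⟨fun i => if i ∈ S then X else R i, S, fun i hi => if_neg hi, hB, ?_⟩
    have hsplit : ∑ i, KT X (if i ∈ S then X else R i)
        = ∑ i ∈ S, KT X (if i ∈ S then X else R i)
          + ∑ i ∈ Sᶜ, KT X (if i ∈ S then X else R i) :=
      (Finset.sum_add_sum_compl S _).symm
    have h1 : ∑ i ∈ S, KT X (if i ∈ S then X else R i) = 0 := by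
      apply Finset.sum_eq_zero
      intro i hi
      rw [if_pos hi, KT_self]
    have h2 : ∑ i ∈ Sᶜ, KT X (if i ∈ S then X else R i)
        = ∑ i ∈ Sᶜ, KT X (R i) :=
      Finset.sum_congr rfl fun i hi => by rw [if_neg (Finset.mem_compl.1 hi)]
    have hD : ∑ i, KT X (R i)
        = ∑ i ∈ S, KT X (R i) + ∑ i ∈ Sᶜ, KT X (R i) :=
      (Finset.sum_add_sum_compl S _).symm
    simp only []
    omega
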